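/- For all integers p ≥ 2, the alternating sum ∑_{j=0}^{2p+1} (-1)^j C(2p+1, j) C(2p-2, 2p+1-j) equals (-1)^p C(2p-1, p) (3-2p)/(2p-1). -/

import Mathlib

/-!
The sum is the coefficient of `X ^ (2p+1)` in `(1 - X) ^ (2p+1) * (1 + X) ^ (2p-2)
= (1 - X) ^ 3 * (1 - X ^ 2) ^ (2p-2)`. Only even powers occur in `(1 - X ^ 2) ^ (2p-2)`, so this
coefficient is `(-1) ^ (p-1) * (3 C(2p-2, p) - C(2p-2, p-1))`, and expressing `C(2p-2, p)` and
`C(2p-1, p)` through `C(2p-2, p-1)` gives the closed form.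
-/

open Polynomial Finset

section

variable {R : Type*} [CommRing R]

theorem coeff_one_sub_X_pow (m k : ℕ) :
    ((1 - X : R[X]) ^ m).coeff k = (-1) ^ k * (m.choose k : R) := by
  rw [show (1 - X : R[X]) = C (-1) * (X + C (-1)) by simp [C_neg]; ring, mul_pow, ← C_pow,
    coeff_C_mul, coeff_X_add_C_pow, ← mul_assoc, ← pow_add]
  rcases le_or_gt k m with hk | hk
  · rw [show m + (m - k) = 2 * (m - k) + k by omega, pow_add, pow_mul, neg_one_sq, one_pow,
      one_mul]
  · simp [Nat.choose_eq_zero_of_lt hk]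

theorem one_sub_X_sq_pow_eq_expand (m : ℕ) :
    (1 - X ^ 2 : R[X]) ^ m = expand R 2 ((1 - X) ^ m) := by
  simp

theorem coeff_one_sub_X_sq_pow (m n : ℕ) :
    ((1 - X ^ 2 : R[X]) ^ m).coeff n =
      if 2 ∣ n then (-1) ^ (n / 2) * (m.choose (n / 2) : R) else 0 := by
  rw [one_sub_X_sq_pow_eq_expand, coeff_expand two_pos, coeff_one_sub_X_pow]

theorem sum_neg_one_pow_mul_choose_mul_choose_eq_coeff (m n k : ℕ) :
    ∑ j ∈ range (k + 1), (-1 : R) ^ j * m.choose j * n.choose (k - j) =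
      ((1 - X : R[X]) ^ m * (1 + X) ^ n).coeff k := by
  rw [coeff_mul, Nat.sum_antidiagonal_eq_sum_range_succ_mk]
  simp only [coeff_one_sub_X_pow, coeff_one_add_X_pow]

theorem coeff_one_sub_X_cube_mul_add_three (f : R[X]) (k : ℕ) :
    ((1 - X) ^ 3 * f).coeff (k + 3) =
      f.coeff (k + 3) - 3 * f.coeff (k + 2) + 3 * f.coeff (k + 1) - f.coeff k := by
  have hcube : (1 - X : R[X]) ^ 3 = 1 - C 3 * X + C 3 * X ^ 2 - X ^ 3 := by
    rw [show (C 3 : R[X]) = 3 from map_ofNat C 3]; ring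
  simp only [hcube, sub_mul, add_mul, one_mul, mul_assoc, coeff_sub, coeff_add, coeff_C_mul]
  rw [show k + 3 = k + 2 + 1 by rfl, coeff_X_mul, show k + 2 + 1 = k + 1 + 2 by rfl,
    coeff_X_pow_mul, show k + 1 + 2 = k + 3 by rfl, coeff_X_pow_mul]

end

theorem sum_neg_one_pow_mul_choose_add_three_mul_choose (s : ℕ) :
    ∑ j ∈ range (2 * s + 4),
        (-1 : ℚ) ^ j * (2 * s + 3).choose j * (2 * s).choose (2 * s + 3 - j) =
      (-1) ^ s * (3 * (2 * s).choose (s + 1) - (2 * s).choose s) := by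
  rw [sum_neg_one_pow_mul_choose_mul_choose_eq_coeff,
    show (1 - X : ℚ[X]) ^ (2 * s + 3) * (1 + X) ^ (2 * s) = (1 - X) ^ 3 * (1 - X ^ 2) ^ (2 * s) by
      rw [add_comm _ 3, pow_add, mul_assoc, ← mul_pow]; ring,
    coeff_one_sub_X_cube_mul_add_three]
  simp only [coeff_one_sub_X_sq_pow]
  rw [if_neg (by omega), if_pos (by omega), if_neg (by omega), if_pos (by omega),
    show (2 * s + 2) / 2 = s + 1 by omega, show 2 * s / 2 = s by omega]
  ring

theorem stmt_2 (p : ℕ) (hp : 2 ≤ p) :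
    ∑ j ∈ Finset.range (2 * p + 2),
        (-1 : ℚ) ^ j * ((2 * p + 1).choose j) * ((2 * p - 2).choose (2 * p + 1 - j)) =
      (-1) ^ p * ((2 * p - 1).choose p) * ((3 : ℚ) - 2 * p) / ((2 : ℚ) * p - 1) := by
  obtain ⟨s, rfl⟩ : ∃ s, p = s + 1 := ⟨p - 1, by omega⟩
  rw [show 2 * (s + 1) + 2 = 2 * s + 4 by ring, show 2 * (s + 1) + 1 = 2 * s + 3 by ring,
    show 2 * (s + 1) - 2 = 2 * s by omega, show 2 * (s + 1) - 1 = 2 * s + 1 by omega,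
    sum_neg_one_pow_mul_choose_add_three_mul_choose]
  have hsucc : ((2 * s + 1).choose (s + 1) : ℚ) * (s + 1) = (2 * s + 1) * (2 * s).choose s := by
    exact_mod_cast (Nat.add_one_mul_choose_eq (2 * s) s).symm
  have hright : ((2 * s).choose (s + 1) : ℚ) * (s + 1) = (2 * s).choose s * s := by
    have := Nat.choose_succ_right_eq (2 * s) s
    rw [show 2 * s - s = s by omega] at this
    exact_mod_cast this
  have hden : (2 : ℚ) * (s + 1 : ℕ) - 1 = 2 * s + 1 := by push_cast; ring
  rw [hden, eq_div_iff (by positivity)]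
  apply mul_right_cancel₀ (show (s : ℚ) + 1 ≠ 0 by positivity)
  push_cast
  linear_combination (-1 : ℚ) ^ s * (3 * (2 * s + 1) * hright - (2 * s - 1) * hsucc)
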